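/- Let G be a locally finite antitree with root v and sphere sizes s_n := |S_n(v)|, and let J be the Jacobi matrix on ℓ²(ℕ) with off-diagonal entries a_n = √(s_n s_{n+1}) and diagonal entries b_n = 0, with domain the finitely supported sequences. Then the adjacency operator A_G and J have the same deficiency indices: η₊(A_G) = η₊(J) and η₋(A_G) = η₋(J). -/

import Mathlib

/-!
Both operators are given on finitely supported functions by real symmetric matrices with finitely
supported rows, so their adjoints act by the same matrices on their maximal domains, and
`ker (T* - z)` is the space of `ℓ²` solutions of the formal eigenvalue equation.

On an antitree, `(A g)(x)` only depends on the sums of `g` over the two spheres adjacent to the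
sphere of `x`; hence for `z ≠ 0` every solution of `A g = z g` is radial. The maps
`g ↦ (s_n^{-1/2} ∑_{S_n} g)_n` and `f ↦ (x ↦ s_{|x|}^{-1/2} f |x|)` do not increase `ℓ²` norms
(Cauchy–Schwarz), intertwine `A` with the Jacobi matrix `J` because `a_n = √(s_n s_{n+1})`, and
are mutually inverse on the two solution spaces.
-/

noncomputable section

open scoped ComplexConjugate

namespace DefIdx

/-- The Hilbert space `ℓ²(V)` of square-summable complex functions on `V`. -/
abbrev L2 (V : Type*) := lp (fun _ : V => ℂ) 2

lemma memℓp_of_finite {V : Type*} {f : V → ℂ} (h : {x | f x ≠ 0}.Finite) :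
    Memℓp f 2 :=
  (memℓp_zero h).of_exponent_ge (zero_le : (0 : ENNReal) ≤ 2)

/-- The subspace `C_c(V)` of finitely supported elements of `ℓ²(V)`. -/
def Cc (V : Type*) : Submodule ℂ (L2 V) where
  carrier := {f | {x | (f : ∀ _ : V, ℂ) x ≠ 0}.Finite}
  zero_mem' := by
    simp only [Set.mem_setOf_eq, lp.coeFn_zero, Pi.zero_apply, ne_eq, not_true_eq_false]
    simp
  add_mem' := by
    intro f g hf hg
    refine (hf.union hg).subset ?_
    intro x hx
    simp only [Set.mem_setOf_eq, lp.coeFn_add, Pi.add_apply] at hx ⊢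
    by_contra hc
    try push_neg at hc
    simp only [Set.mem_union, Set.mem_setOf_eq, not_or, not_not] at hc
    simp [hc.1, hc.2] at hx
  smul_mem' := by
    intro c f hf
    refine hf.subset ?_
    intro x hx
    simp only [Set.mem_setOf_eq, lp.coeFn_smul, Pi.smul_apply, smul_eq_mul] at hx ⊢
    intro h0
    simp [h0] at hx

section Adjacency

variable {V : Type*}

/-- The pointwise action of the adjacency matrix of a locally finite graph. -/
def adjA (G : SimpleGraph V) (hG : G.LocallyFinite) (f : V → ℂ) (x : V) : ℂ :=
  ∑ y ∈ @SimpleGraph.neighborFinset V G x (hG x), f y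

lemma adjA_support (G : SimpleGraph V) (hG : G.LocallyFinite) {f : V → ℂ}
    (hf : {x | f x ≠ 0}.Finite) : {x | adjA G hG f x ≠ 0}.Finite := by
  have hsub : {x | adjA G hG f x ≠ 0} ⊆ ⋃ y ∈ {x | f x ≠ 0}, (G.neighborSet y) := by
    intro x hx
    obtain ⟨y, hy, hfy⟩ := Finset.exists_ne_zero_of_sum_ne_zero hx
    have hadj : G.Adj x y := by
      have := @SimpleGraph.mem_neighborFinset V G x (hG x) y
      exact this.mp hy
    exact Set.mem_biUnion hfy (SimpleGraph.mem_neighborSet G y x |>.mpr hadj.symm)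
  exact (hf.biUnion fun y _ => by haveI := hG y; exact (G.neighborSet y).toFinite).subset hsub

/-- The adjacency operator of a locally finite graph, as a densely defined operator
on `ℓ²(V)` with domain the finitely supported functions. -/
def adjOp (G : SimpleGraph V) (hG : G.LocallyFinite) : L2 V →ₗ.[ℂ] L2 V where
  domain := Cc V
  toFun :=
    { toFun := fun f => ⟨adjA G hG f, memℓp_of_finite (adjA_support G hG f.2)⟩
      map_add' := by
        intro f g
        apply lp.ext
        funext x
        simp only [lp.coeFn_add, Pi.add_apply]
        show adjA G hG (((f : L2 V) + (g : L2 V) : L2 V)) x = _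
        simp only [adjA, lp.coeFn_add, Pi.add_apply]
        exact Finset.sum_add_distrib
      map_smul' := by
        intro c f
        apply lp.ext
        funext x
        simp only [RingHom.id_apply, lp.coeFn_smul, Pi.smul_apply, smul_eq_mul]
        show adjA G hG ((c • (f : L2 V) : L2 V)) x = _
        simp only [adjA, lp.coeFn_smul, Pi.smul_apply, smul_eq_mul]
        exact (Finset.mul_sum _ _ _).symm }

/-- The pointwise action of the combinatorial (physical) Laplacian. -/
def lapA (G : SimpleGraph V) (hG : G.LocallyFinite) (f : V → ℂ) (x : V) : ℂ :=
  ∑ y ∈ @SimpleGraph.neighborFinset V G x (hG x), (f x - f y)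

lemma lapA_support (G : SimpleGraph V) (hG : G.LocallyFinite) {f : V → ℂ}
    (hf : {x | f x ≠ 0}.Finite) : {x | lapA G hG f x ≠ 0}.Finite := by
  have hsub : {x | lapA G hG f x ≠ 0} ⊆
      {x | f x ≠ 0} ∪ ⋃ y ∈ {x | f x ≠ 0}, (G.neighborSet y) := by
    intro x hx
    by_contra hc
    simp only [Set.mem_union, Set.mem_setOf_eq, not_or, not_not] at hc
    obtain ⟨hfx, hmem⟩ := hc
    apply hx
    show lapA G hG f x = 0
    unfold lapA
    refine Finset.sum_eq_zero fun y hy => ?_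
    have hadj : G.Adj x y := (@SimpleGraph.mem_neighborFinset V G x (hG x) y).mp hy
    have hfy : f y = 0 := by
      by_contra hfy
      exact hmem (Set.mem_biUnion hfy ((SimpleGraph.mem_neighborSet G y x).mpr hadj.symm))
    rw [hfx, hfy, sub_zero]
  refine Set.Finite.subset ?_ hsub
  exact hf.union (hf.biUnion fun y _ => by haveI := hG y; exact (G.neighborSet y).toFinite)

/-- The combinatorial (physical) Laplacian of a locally finite graph, as a densely
defined operator on `ℓ²(V)` with domain the finitely supported functions. -/
def lapOp (G : SimpleGraph V) (hG : G.LocallyFinite) : L2 V →ₗ.[ℂ] L2 V where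
  domain := Cc V
  toFun :=
    { toFun := fun f => ⟨lapA G hG f, memℓp_of_finite (lapA_support G hG f.2)⟩
      map_add' := by
        intro f g
        apply lp.ext
        funext x
        simp only [lp.coeFn_add, Pi.add_apply]
        show lapA G hG (((f : L2 V) + (g : L2 V) : L2 V)) x = _
        simp only [lapA, lp.coeFn_add, Pi.add_apply]
        rw [← Finset.sum_add_distrib]
        exact Finset.sum_congr rfl fun y _ => by ring
      map_smul' := by
        intro c f
        apply lp.ext
        funext x
        simp only [RingHom.id_apply, lp.coeFn_smul, Pi.smul_apply, smul_eq_mul]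
        show lapA G hG ((c • (f : L2 V) : L2 V)) x = _
        simp only [lapA, lp.coeFn_smul, Pi.smul_apply, smul_eq_mul]
        rw [Finset.mul_sum]
        exact Finset.sum_congr rfl fun y _ => by ring }

end Adjacency

section Jacobi

/-- The pointwise action of the Jacobi matrix with off-diagonal entries `a n` and
diagonal entries `b n` (with the convention `a (-1) = 0`). -/
def jacA (a b : ℕ → ℝ) (f : ℕ → ℂ) (n : ℕ) : ℂ :=
  (if n = 0 then 0 else (a (n - 1) : ℂ) * f (n - 1)) + (b n : ℂ) * f n + (a n : ℂ) * f (n + 1)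

lemma jacA_support (a b : ℕ → ℝ) {f : ℕ → ℂ} (hf : {n | f n ≠ 0}.Finite) :
    {n | jacA a b f n ≠ 0}.Finite := by
  have hsub : {n | jacA a b f n ≠ 0} ⊆
      (fun m => m + 1) '' {n | f n ≠ 0} ∪ {n | f n ≠ 0} ∪ (fun m => m - 1) '' {n | f n ≠ 0} := by
    intro n hn
    by_contra hc
    simp only [Set.mem_union, not_or] at hc
    apply hn
    show jacA a b f n = 0
    have h1 : f n = 0 := by
      by_contra h; exact hc.1.2 h
    have h3 : f (n + 1) = 0 := by
      by_contra h
      exact hc.2 ⟨n + 1, h, by show n + 1 - 1 = n; omega⟩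
    rcases Nat.eq_zero_or_pos n with h0 | h0
    · subst h0; simp [jacA, h1, h3]
    · have h2 : f (n - 1) = 0 := by
        by_contra h
        exact hc.1.1 ⟨n - 1, h, by show n - 1 + 1 = n; omega⟩
      simp [jacA, h1, h2, h3]
  refine Set.Finite.subset ?_ hsub
  exact ((hf.image _).union hf).union (hf.image _)

/-- The Jacobi matrix with off-diagonal entries `a n > 0` and diagonal entries `b n`,
as a densely defined operator on `ℓ²(ℕ)` with domain the finitely supported sequences. -/
def jacOp (a b : ℕ → ℝ) : L2 ℕ →ₗ.[ℂ] L2 ℕ where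
  domain := Cc ℕ
  toFun :=
    { toFun := fun f => ⟨jacA a b f, memℓp_of_finite (jacA_support a b f.2)⟩
      map_add' := by
        intro f g
        apply lp.ext
        funext n
        simp only [lp.coeFn_add, Pi.add_apply]
        show jacA a b (((f : L2 ℕ) + (g : L2 ℕ) : L2 ℕ)) n = _
        simp only [jacA, lp.coeFn_add, Pi.add_apply]
        split <;> ring
      map_smul' := by
        intro c f
        apply lp.ext
        funext n
        simp only [RingHom.id_apply, lp.coeFn_smul, Pi.smul_apply, smul_eq_mul]
        show jacA a b ((c • (f : L2 ℕ) : L2 ℕ)) n = _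
        simp only [jacA, lp.coeFn_smul, Pi.smul_apply, smul_eq_mul]
        split <;> ring }

end Jacobi

section Eta

variable {H : Type*} [NormedAddCommGroup H] [InnerProductSpace ℂ H] [CompleteSpace H]

/-- The deficiency subspace `ker (T* - z)` of a (partially defined) operator. -/
def defSubspace (T : H →ₗ.[ℂ] H) (z : ℂ) : Submodule ℂ T.adjoint.domain :=
  LinearMap.ker (T.adjoint.toFun - z • T.adjoint.domain.subtype)

/-- The deficiency index `η₊(T) = dim ker (T* - i)`. -/
def etaP (T : H →ₗ.[ℂ] H) : Cardinal := Module.rank ℂ (defSubspace T Complex.I)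

/-- The deficiency index `η₋(T) = dim ker (T* + i)`. -/
def etaM (T : H →ₗ.[ℂ] H) : Cardinal := Module.rank ℂ (defSubspace T (-Complex.I))

/-- A partially defined operator is symmetric if `⟪T f, g⟫ = ⟪f, T g⟫` on its domain. -/
def IsSymm (T : H →ₗ.[ℂ] H) : Prop :=
  ∀ f g : T.domain, (inner ℂ (T f) (g : H) : ℂ) = inner ℂ (f : H) (T g)

/-- A densely defined operator is essentially self-adjoint if its closure is self-adjoint. -/
def EssSelfAdj (T : H →ₗ.[ℂ] H) : Prop :=
  T.closure.adjoint = T.closure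

/-- The restriction of the sum of two partially defined operators to the domain
of the first one, assuming domain inclusion. -/
def sumRestrict (S T : H →ₗ.[ℂ] H) (h : S.domain ≤ T.domain) : H →ₗ.[ℂ] H :=
  ⟨S.domain, S.toFun + T.toFun.comp (Submodule.inclusion h)⟩

/-- The sum of a partially defined operator and a bounded operator, with the
domain of the former. -/
def addBdd (S : H →ₗ.[ℂ] H) (B : H →L[ℂ] H) : H →ₗ.[ℂ] H :=
  ⟨S.domain, S.toFun + (B : H →ₗ[ℂ] H).comp S.domain.subtype⟩

end Eta

section Graphs

variable {V : Type*}

/-- The sphere of radius `n` around the vertex `v` (w.r.t. the graph metric). -/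
def sphere (G : SimpleGraph V) (v : V) (n : ℕ) : Set V := {w | G.dist v w = n}

/-- A connected graph is an antitree with root `v` if every vertex `w ≠ v` at distance
`n ≥ 1` from `v` has exactly `S_{n-1}(v) ∪ S_{n+1}(v)` as its set of neighbours. -/
def IsAntitree (G : SimpleGraph V) (v : V) : Prop :=
  G.Connected ∧ ∀ w, w ≠ v →
    G.neighborSet w = sphere G v (G.dist v w - 1) ∪ sphere G v (G.dist v w + 1)

/-- A function is radially symmetric (w.r.t. the root `v`) if it is constant on
each sphere around `v`. -/
def RadSymm (G : SimpleGraph V) (v : V) (f : V → ℂ) : Prop :=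
  ∀ x y, G.dist v x = G.dist v y → f x = f y

/-- The average of `f` over the sphere of radius `n` around `v`. -/
def sphAvg (G : SimpleGraph V) (v : V) (hfin : ∀ n, (sphere G v n).Finite)
    (f : V → ℂ) (n : ℕ) : ℂ :=
  (1 / ((sphere G v n).ncard : ℂ)) * ∑ y ∈ (hfin n).toFinset, f y

/-- The sphere-averaging map `P`. -/
def sphP (G : SimpleGraph V) (v : V) (hfin : ∀ n, (sphere G v n).Finite)
    (f : V → ℂ) (x : V) : ℂ :=
  sphAvg G v hfin f (G.dist v x)

/-- The disjoint union of `n` copies of a graph. -/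
def copies (G : SimpleGraph V) (n : ℕ) : SimpleGraph (Fin n × V) where
  Adj p q := p.1 = q.1 ∧ G.Adj p.2 q.2
  symm := ⟨fun p q h => ⟨h.1.symm, h.2.symm⟩⟩
  loopless := ⟨fun q h => G.loopless.irrefl q.2 h.2⟩

/-- The disjoint union of copies of a locally finite graph is locally finite. -/
def copiesLF (G : SimpleGraph V) (hG : G.LocallyFinite) (n : ℕ) :
    (copies G n).LocallyFinite := fun p =>
  Set.Finite.fintype (by
    haveI := hG p.2
    have hsub : (copies G n).neighborSet p ⊆ (fun w => (p.1, w)) '' (G.neighborSet p.2) := by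
      rintro ⟨i, w⟩ ⟨h1, h2⟩
      exact ⟨w, h2, by simp [h1]⟩
    exact ((G.neighborSet p.2).toFinite.image _).subset hsub)

end Graphs



section FinitelySupported

variable {V : Type*}

lemma dense_Cc : Dense (Cc V : Set (L2 V)) := by
  classical
  intro f
  refine mem_closure_of_tendsto (lp.hasSum_single ENNReal.ofNat_ne_top f)
    (Filter.Eventually.of_forall fun s => Submodule.sum_mem _ fun i _ => ?_)
  refine (Set.finite_singleton i).subset fun x hx => ?_
  by_contra hxi
  exact hx (lp.single_apply_ne 2 i _ hxi)

lemma single_mem_Cc [DecidableEq V] (x : V) : lp.single 2 x (1 : ℂ) ∈ Cc V := by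
  refine (Set.finite_singleton x).subset fun y hy => ?_
  by_contra hyx
  exact hy (lp.single_apply_ne 2 x _ hyx)

lemma inner_eq_tsum_conj_mul (g f : L2 V) : inner ℂ g f = ∑' x, conj (g x) * f x := by
  rw [lp.inner_eq_tsum]
  exact tsum_congr fun x => (RCLike.inner_apply _ _).trans (mul_comm _ _)

lemma memℓp_two_iff_summable_sq {f : V → ℂ} : Memℓp f 2 ↔ Summable fun x => ‖f x‖ ^ 2 := by
  rw [memℓp_gen_iff (by norm_num)]
  norm_num

end FinitelySupported

section RowFinite

variable {V : Type*}

def rowFiniteMulVec (M : V → V →₀ ℝ) : (V → ℂ) →ₗ[ℂ] (V → ℂ) where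
  toFun f x := (M x).sum fun y c => (c : ℂ) * f y
  map_add' f g := by
    ext x
    simp [Finsupp.sum, mul_add, Finset.sum_add_distrib]
  map_smul' c f := by
    ext x
    simp [Finsupp.sum, Finset.mul_sum, mul_left_comm]

lemma rowFiniteMulVec_apply (M : V → V →₀ ℝ) (f : V → ℂ) (x : V) :
    rowFiniteMulVec M f x = (M x).sum fun y c => (c : ℂ) * f y := rfl

lemma rowFiniteMulVec_apply_eq_tsum (M : V → V →₀ ℝ) (f : V → ℂ) (x : V) :
    rowFiniteMulVec M f x = ∑' y, (M x y : ℂ) * f y :=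
  (tsum_eq_sum fun y hy => by simp [Finsupp.notMem_support_iff.1 hy]).symm

lemma tsum_conj_mul_rowFiniteMulVec {M : V → V →₀ ℝ} (hM : ∀ x y, M x y = M y x)
    (g : V → ℂ) {f : V → ℂ} (hf : (Function.support f).Finite) :
    ∑' x, conj (g x) * rowFiniteMulVec M f x = ∑' y, conj (rowFiniteMulVec M g y) * f y := by
  have hsupp :
      (Function.support fun p : V × V => conj (g p.1) * ((M p.1 p.2 : ℂ) * f p.2)).Finite := by
    refine (hf.biUnion fun y _ =>
      (M y).support.finite_toSet.prod (Set.finite_singleton y)).subset ?_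
    rintro ⟨x, y⟩ hxy
    simp only [Function.mem_support, ne_eq, mul_eq_zero, not_or, Complex.ofReal_eq_zero] at hxy
    simp only [Set.mem_iUnion, Set.mem_prod, Finset.mem_coe, Finsupp.mem_support_iff,
      Set.mem_singleton_iff]
    exact ⟨y, hxy.2.2, hM x y ▸ hxy.2.1, rfl⟩
  have hrow : ∀ x, Summable fun y => conj (g x) * ((M x y : ℂ) * f y) :=
    fun x => summable_of_hasFiniteSupport (hsupp.preimage (Prod.mk_right_injective x).injOn)
  have hcol : ∀ y, Summable fun x => conj (g x) * ((M x y : ℂ) * f y) :=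
    fun y => summable_of_hasFiniteSupport (hsupp.preimage (Prod.mk_left_injective y).injOn)
  calc ∑' x, conj (g x) * rowFiniteMulVec M f x
      = ∑' x, ∑' y, conj (g x) * ((M x y : ℂ) * f y) := by
        simp only [rowFiniteMulVec_apply_eq_tsum, tsum_mul_left]
    _ = ∑' y, ∑' x, conj (g x) * ((M x y : ℂ) * f y) :=
        ((summable_of_hasFiniteSupport hsupp).tsum_comm' hrow hcol).symm
    _ = ∑' y, conj (rowFiniteMulVec M g y) * f y := by
        simp only [rowFiniteMulVec_apply_eq_tsum, Complex.conj_tsum, ← tsum_mul_right]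
        refine tsum_congr fun y => tsum_congr fun x => ?_
        rw [map_mul, Complex.conj_ofReal, hM]
        ring

end RowFinite

section Eigenspace

variable {V : Type*}

def l2Eigenspace (L : (V → ℂ) →ₗ[ℂ] (V → ℂ)) (z : ℂ) : Submodule ℂ (L2 V) where
  carrier := {g | L g = z • ⇑g}
  add_mem' {f g} hf hg := by
    simp only [Set.mem_setOf_eq, lp.coeFn_add, map_add, smul_add] at *
    rw [hf, hg]
  zero_mem' := by
    show L ⇑(0 : L2 V) = z • ⇑(0 : L2 V)
    rw [lp.coeFn_zero, map_zero, smul_zero]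
  smul_mem' c g hg := by
    simp only [Set.mem_setOf_eq, lp.coeFn_smul, map_smul] at *
    rw [hg, smul_comm]

lemma mem_l2Eigenspace {L : (V → ℂ) →ₗ[ℂ] (V → ℂ)} {z : ℂ} {g : L2 V} :
    g ∈ l2Eigenspace L z ↔ L g = z • ⇑g := Iff.rfl

end Eigenspace

section Adjoint

variable {V : Type*} {M : V → V →₀ ℝ} {T : L2 V →ₗ.[ℂ] L2 V}

lemma inner_apply_eq_tsum_rowFiniteMulVec (hM : ∀ x y, M x y = M y x) (hdom : T.domain = Cc V)
    (hT : ∀ f : T.domain, ⇑(T f) = rowFiniteMulVec M f) (g : L2 V) (f : T.domain) :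
    inner ℂ g (T f) = ∑' x, conj (rowFiniteMulVec M g x) * (f : L2 V) x := by
  have hf : (Function.support ⇑(f : L2 V)).Finite := (hdom ▸ f.2 : (f : L2 V) ∈ Cc V)
  rw [inner_eq_tsum_conj_mul, hT, tsum_conj_mul_rowFiniteMulVec hM _ hf]

lemma mem_adjoint_domain_of_memℓp (hM : ∀ x y, M x y = M y x) (hdom : T.domain = Cc V)
    (hT : ∀ f : T.domain, ⇑(T f) = rowFiniteMulVec M f) {g : L2 V}
    (hg : Memℓp (rowFiniteMulVec M g) 2) : g ∈ T.adjoint.domain :=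
  LinearPMap.mem_adjoint_domain_of_exists _ ⟨⟨_, hg⟩, fun f => by
    rw [inner_apply_eq_tsum_rowFiniteMulVec hM hdom hT, inner_eq_tsum_conj_mul]⟩

lemma coe_adjoint_apply (hM : ∀ x y, M x y = M y x) (hdom : T.domain = Cc V)
    (hT : ∀ f : T.domain, ⇑(T f) = rowFiniteMulVec M f) (g : T.adjoint.domain) :
    ⇑(T.adjoint g) = rowFiniteMulVec M g := by
  classical
  ext x
  let δ : T.domain := ⟨lp.single 2 x 1, hdom ▸ single_mem_Cc x⟩
  have h := LinearPMap.adjoint_isFormalAdjoint (hdom ▸ dense_Cc) g δ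
  rw [inner_apply_eq_tsum_rowFiniteMulVec hM hdom hT, inner_eq_tsum_conj_mul] at h
  simp only [δ, lp.coeFn_single, Pi.single_apply, mul_ite, mul_one, mul_zero, tsum_ite_eq] at h
  exact (starRingEnd ℂ).injective h

theorem rank_defSubspace_eq_rank_l2Eigenspace (hM : ∀ x y, M x y = M y x)
    (hdom : T.domain = Cc V) (hT : ∀ f : T.domain, ⇑(T f) = rowFiniteMulVec M f) (z : ℂ) :
    Module.rank ℂ (defSubspace T z) = Module.rank ℂ (l2Eigenspace (rowFiniteMulVec M) z) := by
  have hmap :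
      (defSubspace T z).map T.adjoint.domain.subtype = l2Eigenspace (rowFiniteMulVec M) z := by
    ext g
    simp only [Submodule.mem_map, mem_l2Eigenspace]
    constructor
    · rintro ⟨g, hg, rfl⟩
      have hg : T.adjoint g = z • (g : L2 V) := sub_eq_zero.1 hg
      rw [Submodule.subtype_apply, ← coe_adjoint_apply hM hdom hT, hg, lp.coeFn_smul]
    · intro hg
      have hdg : g ∈ T.adjoint.domain := mem_adjoint_domain_of_memℓp hM hdom hT (hg ▸ (z • g).2)
      refine ⟨⟨g, hdg⟩, sub_eq_zero.2 (lp.ext ?_), rfl⟩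
      exact (coe_adjoint_apply hM hdom hT ⟨g, hdg⟩).trans hg
  rw [← hmap]
  exact (Submodule.equivMapOfInjective _ Subtype.val_injective _).rank_eq

end Adjoint

section Instances

variable {V : Type*}

def adjRow (G : SimpleGraph V) (hG : G.LocallyFinite) (x : V) : V →₀ ℝ :=
  ∑ y ∈ @SimpleGraph.neighborFinset V G x (hG x), Finsupp.single y 1

lemma adjRow_symm (G : SimpleGraph V) (hG : G.LocallyFinite) (x y : V) :
    adjRow G hG x y = adjRow G hG y x := by
  classical
  simp only [adjRow, Finsupp.finsetSum_apply, Finsupp.single_apply, Finset.sum_ite_eq',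
    SimpleGraph.mem_neighborFinset, G.adj_comm]

lemma rowFiniteMulVec_adjRow (G : SimpleGraph V) (hG : G.LocallyFinite) (f : V → ℂ) :
    rowFiniteMulVec (adjRow G hG) f = adjA G hG f := by
  ext x
  simp [rowFiniteMulVec_apply, adjRow, adjA, ← Finsupp.sum_finsetSum_index, add_mul]

-- The guard is needed because `n - 1` truncates to `0` at `n = 0`.
def jacobiRow (a b : ℕ → ℝ) (n : ℕ) : ℕ →₀ ℝ :=
  Finsupp.single (n - 1) (if n = 0 then 0 else a (n - 1)) + Finsupp.single n (b n) +
    Finsupp.single (n + 1) (a n)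

lemma jacobiRow_symm (a b : ℕ → ℝ) (n m : ℕ) : jacobiRow a b n m = jacobiRow a b m n := by
  simp only [jacobiRow, Finsupp.add_apply, Finsupp.single_apply]
  split_ifs <;> first | rfl | omega | (subst_vars; simp_all)

lemma rowFiniteMulVec_jacobiRow (a b : ℕ → ℝ) (f : ℕ → ℂ) :
    rowFiniteMulVec (jacobiRow a b) f = jacA a b f := by
  ext n
  rw [rowFiniteMulVec_apply, jacobiRow, Finsupp.sum_add_index', Finsupp.sum_add_index'] <;>
    simp [jacA, add_mul]
  split_ifs <;> simp

lemma rank_defSubspace_adjOp (G : SimpleGraph V) (hG : G.LocallyFinite) (z : ℂ) :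
    Module.rank ℂ (defSubspace (adjOp G hG) z) =
      Module.rank ℂ (l2Eigenspace (rowFiniteMulVec (adjRow G hG)) z) :=
  rank_defSubspace_eq_rank_l2Eigenspace (T := adjOp G hG) (adjRow_symm G hG) rfl
    (fun f => (rowFiniteMulVec_adjRow G hG f).symm) z

lemma rank_defSubspace_jacOp (a b : ℕ → ℝ) (z : ℂ) :
    Module.rank ℂ (defSubspace (jacOp a b) z) =
      Module.rank ℂ (l2Eigenspace (rowFiniteMulVec (jacobiRow a b)) z) :=
  rank_defSubspace_eq_rank_l2Eigenspace (T := jacOp a b) (jacobiRow_symm a b) rfl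
    (fun f => (rowFiniteMulVec_jacobiRow a b f).symm) z

end Instances

section Intertwining

universe u

variable {V W : Type u}

def _root_.LinearMap.toL2 (Φ : (V → ℂ) →ₗ[ℂ] (W → ℂ)) (hΦ : ∀ g, Memℓp g 2 → Memℓp (Φ g) 2) :
    L2 V →ₗ[ℂ] L2 W where
  toFun g := ⟨Φ g, hΦ g g.2⟩
  map_add' f g := lp.ext (map_add Φ (f : V → ℂ) g)
  map_smul' c g := lp.ext (map_smul Φ c (g : V → ℂ))

theorem rank_l2Eigenspace_eq_of_intertwining {L₁ : (V → ℂ) →ₗ[ℂ] (V → ℂ)}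
    {L₂ : (W → ℂ) →ₗ[ℂ] (W → ℂ)} {z : ℂ}
    (Φ : (V → ℂ) →ₗ[ℂ] (W → ℂ)) (Ψ : (W → ℂ) →ₗ[ℂ] (V → ℂ))
    (hΦ : ∀ g, Memℓp g 2 → Memℓp (Φ g) 2) (hΨ : ∀ f, Memℓp f 2 → Memℓp (Ψ f) 2)
    (hΦL : ∀ g, Φ (L₁ g) = L₂ (Φ g)) (hΨL : ∀ f, Ψ (L₂ f) = L₁ (Ψ f))
    (hΨΦ : ∀ g, L₁ g = z • g → Ψ (Φ g) = g) (hΦΨ : ∀ f, L₂ f = z • f → Φ (Ψ f) = f) :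
    Module.rank ℂ (l2Eigenspace L₁ z) = Module.rank ℂ (l2Eigenspace L₂ z) := by
  let A := (Φ.toL2 hΦ).restrict (p := l2Eigenspace L₁ z) (q := l2Eigenspace L₂ z)
    fun g (hg : L₁ g = z • ⇑g) => show L₂ (Φ g) = z • Φ g by rw [← hΦL, hg, map_smul]
  let B := (Ψ.toL2 hΨ).restrict (p := l2Eigenspace L₂ z) (q := l2Eigenspace L₁ z)
    fun f (hf : L₂ f = z • ⇑f) => show L₁ (Ψ f) = z • Ψ f by rw [← hΨL, hf, map_smul]
  refine (LinearEquiv.ofLinearMap A B ?_ ?_).rank_eq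
  · exact LinearMap.ext fun f => Subtype.ext (lp.ext (hΦΨ f f.2))
  · exact LinearMap.ext fun g => Subtype.ext (lp.ext (hΨΦ g g.2))

end Intertwining

section Spheres

variable {V : Type*} {G : SimpleGraph V} {v : V}

lemma sphere_zero (hconn : G.Connected) : sphere G v 0 = {v} := by
  ext w
  simp [sphere, hconn.dist_eq_zero_iff, eq_comm]

lemma exists_adj_of_dist_eq_succ (hconn : G.Connected) {x : V} {n : ℕ}
    (hx : G.dist v x = n + 1) : ∃ y, G.Adj y x ∧ G.dist v y = n := by
  obtain ⟨p, hp⟩ := hconn.exists_walk_length_eq_dist x v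
  have hxv : x ≠ v := by rintro rfl; simp at hx
  obtain ⟨y, hxy, q, rfl⟩ := p.exists_eq_cons_of_ne hxv
  have hq : G.dist v y ≤ n := by
    have := SimpleGraph.dist_le q
    rw [SimpleGraph.Walk.length_cons, SimpleGraph.dist_comm, hx] at hp
    rw [SimpleGraph.dist_comm]
    omega
  refine ⟨y, hxy.symm, ?_⟩
  rcases hxy.diff_dist_adj (u := v) with h | h | h <;> omega

lemma sphere_finite (hG : G.LocallyFinite) (hconn : G.Connected) (n : ℕ) :
    (sphere G v n).Finite := by
  induction n with
  | zero => simp [sphere_zero hconn]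
  | succ n ih =>
    refine (ih.biUnion fun y _ => (haveI := hG y; (G.neighborSet y).toFinite)).subset
      fun x hx => ?_
    obtain ⟨y, hyx, hy⟩ := exists_adj_of_dist_eq_succ hconn hx
    exact Set.mem_biUnion hy hyx

lemma IsAntitree.neighborSet_root (hAT : IsAntitree G v) : G.neighborSet v = sphere G v 1 := by
  ext w
  refine ⟨fun hw => ?_, fun hw => SimpleGraph.dist_eq_one_iff_adj.1 hw⟩
  have hv : v ∈ G.neighborSet w := hw.symm
  rw [hAT.2 w hw.ne.symm] at hv
  have := hAT.1.pos_dist_of_ne hw.ne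
  simp only [sphere, Set.mem_union, Set.mem_setOf_eq, SimpleGraph.dist_self] at hv
  show G.dist v w = 1
  omega

def sphereSum {M : Type*} [AddCommMonoid M] (hfin : ∀ n, (sphere G v n).Finite) (g : V → M)
    (n : ℕ) : M :=
  ∑ x ∈ (hfin n).toFinset, g x

lemma IsAntitree.adjA_eq_sphereSum (hG : G.LocallyFinite) (hAT : IsAntitree G v)
    (hfin : ∀ n, (sphere G v n).Finite) (g : V → ℂ) (x : V) :
    adjA G hG g x = (if G.dist v x = 0 then 0 else sphereSum hfin g (G.dist v x - 1)) +
      sphereSum hfin g (G.dist v x + 1) := by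
  classical
  by_cases hx : x = v
  · subst hx
    have hN : @SimpleGraph.neighborFinset V G x (hG x) = (hfin 1).toFinset :=
      Finset.coe_injective (by simpa using hAT.neighborSet_root)
    simp [adjA, sphereSum, hN]
  · have hd : G.dist v x ≠ 0 := (hAT.1.pos_dist_of_ne (Ne.symm hx)).ne'
    have hN : @SimpleGraph.neighborFinset V G x (hG x) =
        (hfin (G.dist v x - 1)).toFinset ∪ (hfin (G.dist v x + 1)).toFinset :=
      Finset.coe_injective (by simpa using hAT.2 x hx)
    have hdisj : Disjoint (hfin (G.dist v x - 1)).toFinset (hfin (G.dist v x + 1)).toFinset := by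
      simp only [Set.Finite.disjoint_toFinset]
      exact Set.disjoint_left.2 fun y (h₁ : _ = _) (h₂ : _ = _) => by omega
    rw [adjA, hN, Finset.sum_union hdisj, if_neg hd, sphereSum, sphereSum]

lemma IsAntitree.radSymm_of_adjA_eq_smul (hG : G.LocallyFinite) (hAT : IsAntitree G v)
    {z : ℂ} (hz : z ≠ 0) {g : V → ℂ} (hg : adjA G hG g = z • g) : RadSymm G v g := by
  intro x y hxy
  have hfin := sphere_finite (v := v) hG hAT.1
  have hx := congrFun hg x
  have hy := congrFun hg y
  rw [hAT.adjA_eq_sphereSum hG hfin, hxy, ← hAT.adjA_eq_sphereSum hG hfin] at hx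
  exact mul_left_cancel₀ hz (hx.symm.trans hy)

end Spheres

section Radial

variable {V : Type*} {G : SimpleGraph V} {v : V} (hfin : ∀ n, (sphere G v n).Finite)

variable (G v) in
def sqrtCard (n : ℕ) : ℂ := (√((sphere G v n).ncard : ℝ) : ℝ)

lemma sqrtCard_mul_self (n : ℕ) : sqrtCard G v n * sqrtCard G v n = (sphere G v n).ncard := by
  rw [sqrtCard, ← Complex.ofReal_mul, Real.mul_self_sqrt (Nat.cast_nonneg _)]
  norm_cast

lemma sqrtCard_eq_zero_iff {n : ℕ} : sqrtCard G v n = 0 ↔ (sphere G v n).ncard = 0 := by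
  simp [sqrtCard]

lemma sqrtCard_dist_ne_zero (hfin : ∀ n, (sphere G v n).Finite) (x : V) :
    sqrtCard G v (G.dist v x) ≠ 0 :=
  sqrtCard_eq_zero_iff.not.2 (Set.ncard_ne_zero_of_mem rfl (hfin _))

lemma sphereSum_eq_zero_of_ncard_eq_zero {M : Type*} [AddCommMonoid M]
    (g : V → M) {n : ℕ} (hn : (sphere G v n).ncard = 0) :
    sphereSum hfin g n = 0 := by
  simp [sphereSum, (Set.ncard_eq_zero (hfin n)).1 hn]

lemma sphereSum_eq_ncard_mul {R : Type*} [NonAssocSemiring R]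
    {g : V → R} {n : ℕ} {c : R}
    (hg : ∀ x ∈ sphere G v n, g x = c) : sphereSum hfin g n = (sphere G v n).ncard * c := by
  rw [sphereSum, Finset.sum_congr rfl fun x hx => hg x ((hfin n).mem_toFinset.1 hx),
    Finset.sum_const, Set.ncard_eq_toFinset_card _ (hfin n), nsmul_eq_mul]

-- On an empty sphere `(sqrtCard G v n)⁻¹ = 0`, so `toRadial` only inverts `ofRadial` on sequences
-- vanishing there.
def toRadial : (V → ℂ) →ₗ[ℂ] (ℕ → ℂ) where
  toFun g n := (sqrtCard G v n)⁻¹ * sphereSum hfin g n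
  map_add' f g := by
    ext n
    simp [sphereSum, Finset.sum_add_distrib, mul_add]
  map_smul' c g := by
    ext n
    simp [sphereSum, Finset.mul_sum, mul_left_comm]

variable (G v) in
def ofRadial : (ℕ → ℂ) →ₗ[ℂ] (V → ℂ) where
  toFun f x := (sqrtCard G v (G.dist v x))⁻¹ * f (G.dist v x)
  map_add' f g := by
    ext x
    simp [mul_add]
  map_smul' c f := by
    ext x
    simp [mul_left_comm]

lemma toRadial_apply (g : V → ℂ) (n : ℕ) :
    toRadial hfin g n = (sqrtCard G v n)⁻¹ * sphereSum hfin g n := rfl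

lemma ofRadial_apply (f : ℕ → ℂ) (x : V) :
    ofRadial G v f x = (sqrtCard G v (G.dist v x))⁻¹ * f (G.dist v x) := rfl

lemma sqrtCard_mul_toRadial (g : V → ℂ) (n : ℕ) :
    sqrtCard G v n * toRadial hfin g n = sphereSum hfin g n := by
  by_cases hn : (sphere G v n).ncard = 0
  · rw [sqrtCard_eq_zero_iff.2 hn, sphereSum_eq_zero_of_ncard_eq_zero hfin g hn, zero_mul]
  · exact mul_inv_cancel_left₀ (sqrtCard_eq_zero_iff.not.2 hn) _

lemma sphereSum_ofRadial (f : ℕ → ℂ) (n : ℕ) :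
    sphereSum hfin (ofRadial G v f) n = sqrtCard G v n * f n := by
  rw [sphereSum_eq_ncard_mul hfin (c := (sqrtCard G v n)⁻¹ * f n) fun x (hx : _ = _) => by
    rw [ofRadial_apply, hx], ← sqrtCard_mul_self]
  rcases eq_or_ne (sqrtCard G v n) 0 with h | h
  · simp [h]
  · field_simp

lemma ofRadial_toRadial {g : V → ℂ} (hg : RadSymm G v g) :
    ofRadial G v (toRadial hfin g) = g := by
  ext x
  have h0 := sqrtCard_dist_ne_zero hfin x
  rw [ofRadial_apply, toRadial_apply, sphereSum_eq_ncard_mul hfin (c := g x) fun y hy => hg y x hy,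
    ← sqrtCard_mul_self]
  field_simp

lemma toRadial_ofRadial {f : ℕ → ℂ}
    (hf : ∀ n, (sphere G v n).ncard = 0 → f n = 0) : toRadial hfin (ofRadial G v f) = f := by
  ext n
  rw [toRadial_apply, sphereSum_ofRadial]
  by_cases hn : (sphere G v n).ncard = 0
  · rw [hf n hn, mul_zero, mul_zero]
  · exact inv_mul_cancel_left₀ (sqrtCard_eq_zero_iff.not.2 hn) _

lemma norm_sqrtCard_sq (n : ℕ) : ‖sqrtCard G v n‖ ^ 2 = (sphere G v n).ncard := by
  rw [sqrtCard, Complex.norm_real, Real.norm_of_nonneg (Real.sqrt_nonneg _),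
    Real.sq_sqrt (Nat.cast_nonneg _)]

lemma summable_iff_summable_sphereSum {h : V → ℝ}
    (h0 : 0 ≤ h) : Summable h ↔ Summable (sphereSum hfin h) := by
  rw [summable_partition h0 (s := sphere G v) fun x => ⟨G.dist v x, rfl, fun n hn => hn.symm⟩]
  have hsum : ∀ n, ∑' x : sphere G v n, h x = sphereSum hfin h n := fun n => by
    rw [sphereSum, ← Finset.tsum_subtype', Set.Finite.coe_toFinset]
  simp only [hsum]
  exact and_iff_right_of_imp fun _ n => (hfin n).summable h

lemma norm_sphereSum_sq_le (g : V → ℂ) (n : ℕ) :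
    ‖sphereSum hfin g n‖ ^ 2 ≤ (sphere G v n).ncard * sphereSum hfin (fun x => ‖g x‖ ^ 2) n := by
  rw [sphereSum, sphereSum, Set.ncard_eq_toFinset_card _ (hfin n)]
  exact (pow_le_pow_left₀ (norm_nonneg _) (norm_sum_le _ _) 2).trans sq_sum_le_card_mul_sum_sq

lemma memℓp_toRadial {g : V → ℂ} (hg : Memℓp g 2) :
    Memℓp (toRadial hfin g) 2 := by
  rw [memℓp_two_iff_summable_sq] at hg ⊢
  refine ((summable_iff_summable_sphereSum hfin fun _ => sq_nonneg _).1 hg).of_nonneg_of_le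
    (fun _ => sq_nonneg _) fun n => ?_
  by_cases hn : (sphere G v n).ncard = 0
  · rw [toRadial_apply, sphereSum_eq_zero_of_ncard_eq_zero hfin _ hn, mul_zero, norm_zero,
      zero_pow two_ne_zero]
    exact Finset.sum_nonneg fun _ _ => sq_nonneg _
  · have hn : (0 : ℝ) < (sphere G v n).ncard := Nat.cast_pos.2 (Nat.pos_of_ne_zero hn)
    calc ‖toRadial hfin g n‖ ^ 2 = ‖sphereSum hfin g n‖ ^ 2 / (sphere G v n).ncard := by
          rw [toRadial_apply, norm_mul, norm_inv, mul_pow, inv_pow, norm_sqrtCard_sq,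
            inv_mul_eq_div]
      _ ≤ sphereSum hfin (fun x => ‖g x‖ ^ 2) n := by
          rw [div_le_iff₀' hn]
          exact norm_sphereSum_sq_le hfin g n

lemma memℓp_ofRadial (hfin : ∀ n, (sphere G v n).Finite) {f : ℕ → ℂ} (hf : Memℓp f 2) :
    Memℓp (ofRadial G v f) 2 := by
  rw [memℓp_two_iff_summable_sq] at hf ⊢
  refine (summable_iff_summable_sphereSum hfin fun _ => sq_nonneg _).2 (hf.of_nonneg_of_le
    (fun _ => Finset.sum_nonneg fun _ _ => sq_nonneg _) fun n => ?_)
  rw [sphereSum_eq_ncard_mul hfin (c := ‖(sqrtCard G v n)⁻¹ * f n‖ ^ 2) fun x (hx : _ = _) => by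
    rw [ofRadial_apply, hx], norm_mul, mul_pow, norm_inv, inv_pow, norm_sqrtCard_sq]
  by_cases hn : (sphere G v n).ncard = 0
  · simp [hn]
  · rw [mul_inv_cancel_left₀ (Nat.cast_ne_zero.2 hn)]

end Radial

section Antitree

variable {V : Type*} {G : SimpleGraph V} {v : V} {a : ℕ → ℝ}

lemma ofReal_eq_sqrtCard_mul (ha : ∀ n, a n = √((sphere G v n).ncard * (sphere G v (n + 1)).ncard))
    (n : ℕ) : (a n : ℂ) = sqrtCard G v n * sqrtCard G v (n + 1) := by
  rw [ha, Real.sqrt_mul (Nat.cast_nonneg _), Complex.ofReal_mul, sqrtCard, sqrtCard]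

lemma IsAntitree.toRadial_adjA (hG : G.LocallyFinite) (hAT : IsAntitree G v)
    (hfin : ∀ n, (sphere G v n).Finite)
    (ha : ∀ n, a n = √((sphere G v n).ncard * (sphere G v (n + 1)).ncard)) (g : V → ℂ) :
    toRadial hfin (adjA G hG g) = jacA a (fun _ => 0) (toRadial hfin g) := by
  ext n
  have hconst : sphereSum hfin (adjA G hG g) n = (sphere G v n).ncard *
      ((if n = 0 then 0 else sphereSum hfin g (n - 1)) + sphereSum hfin g (n + 1)) :=
    sphereSum_eq_ncard_mul hfin fun x (hx : _ = _) => by rw [hAT.adjA_eq_sphereSum hG hfin, hx]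
  have hnext : (a n : ℂ) * toRadial hfin g (n + 1) = sqrtCard G v n * sphereSum hfin g (n + 1) := by
    rw [ofReal_eq_sqrtCard_mul ha, mul_assoc, sqrtCard_mul_toRadial]
  rw [toRadial_apply, hconst, ← sqrtCard_mul_self, ← mul_assoc, ← mul_assoc, inv_mul_mul_self,
    jacA, hnext]
  split_ifs with hn
  · push_cast
    ring
  · have hprev : (a (n - 1) : ℂ) * toRadial hfin g (n - 1) =
        sqrtCard G v n * sphereSum hfin g (n - 1) := by
      rw [ofReal_eq_sqrtCard_mul ha, Nat.sub_add_cancel (Nat.pos_of_ne_zero hn),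
        mul_comm (sqrtCard G v (n - 1)), mul_assoc, sqrtCard_mul_toRadial]
    rw [hprev]
    push_cast
    ring

lemma IsAntitree.adjA_ofRadial (hG : G.LocallyFinite) (hAT : IsAntitree G v)
    (hfin : ∀ n, (sphere G v n).Finite)
    (ha : ∀ n, a n = √((sphere G v n).ncard * (sphere G v (n + 1)).ncard)) (f : ℕ → ℂ) :
    adjA G hG (ofRadial G v f) = ofRadial G v (jacA a (fun _ => 0) f) := by
  ext x
  have h0 := sqrtCard_dist_ne_zero hfin x
  rw [hAT.adjA_eq_sphereSum hG hfin, sphereSum_ofRadial, sphereSum_ofRadial, ofRadial_apply, jacA]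
  split_ifs with hn
  · rw [ofReal_eq_sqrtCard_mul ha]
    field_simp
    push_cast
    ring
  · rw [ofReal_eq_sqrtCard_mul ha, ofReal_eq_sqrtCard_mul ha (G.dist v x),
      Nat.sub_add_cancel (Nat.pos_of_ne_zero hn)]
    field_simp
    push_cast
    ring

lemma eq_zero_of_jacA_eq_smul (hconn : G.Connected)
    (ha : ∀ n, a n = √((sphere G v n).ncard * (sphere G v (n + 1)).ncard)) {z : ℂ} (hz : z ≠ 0)
    {f : ℕ → ℂ} (hf : jacA a (fun _ => 0) f = z • f) {n : ℕ} (hn : (sphere G v n).ncard = 0) :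
    f n = 0 := by
  cases n with
  | zero => simp [sphere_zero hconn] at hn
  | succ k =>
    have h := congrFun hf (k + 1)
    simp [jacA, ofReal_eq_sqrtCard_mul ha, sqrtCard_eq_zero_iff.2 hn] at h
    exact h.resolve_left hz

theorem IsAntitree.rank_l2Eigenspace_adjRow_eq {V : Type} {G : SimpleGraph V} {v : V}
    (hG : G.LocallyFinite) (hAT : IsAntitree G v) {a : ℕ → ℝ}
    (ha : ∀ n, a n = √((sphere G v n).ncard * (sphere G v (n + 1)).ncard)) {z : ℂ} (hz : z ≠ 0) :
    Module.rank ℂ (l2Eigenspace (rowFiniteMulVec (adjRow G hG)) z) =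
      Module.rank ℂ (l2Eigenspace (rowFiniteMulVec (jacobiRow a fun _ => 0)) z) := by
  have hfin := sphere_finite (v := v) hG hAT.1
  refine rank_l2Eigenspace_eq_of_intertwining (toRadial hfin) (ofRadial G v)
    (fun _ => memℓp_toRadial hfin) (fun _ => memℓp_ofRadial hfin) ?_ ?_ ?_ ?_ <;>
    simp only [rowFiniteMulVec_adjRow, rowFiniteMulVec_jacobiRow]
  · exact hAT.toRadial_adjA hG hfin ha
  · exact fun f => (hAT.adjA_ofRadial hG hfin ha f).symm
  · exact fun g hg => ofRadial_toRadial hfin (hAT.radSymm_of_adjA_eq_smul hG hz hg)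
  · exact fun f hf => toRadial_ofRadial hfin fun n => eq_zero_of_jacA_eq_smul hAT.1 ha hz hf

end Antitree

theorem antitree_jacobi_same_deficiency_general {V : Type}
    (G : SimpleGraph V) (hG : G.LocallyFinite) (v : V) (hAT : IsAntitree G v)
    (a : ℕ → ℝ)
    (ha : ∀ n, a n = Real.sqrt
      (((sphere G v n).ncard : ℝ) * ((sphere G v (n + 1)).ncard : ℝ))) :
    etaP (adjOp G hG) = etaP (jacOp a fun _ => 0) ∧
    etaM (adjOp G hG) = etaM (jacOp a fun _ => 0) := by
  have key : ∀ z : ℂ, z ≠ 0 → Module.rank ℂ (defSubspace (adjOp G hG) z) =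
      Module.rank ℂ (defSubspace (jacOp a fun _ => 0) z) := fun z hz => by
    rw [rank_defSubspace_adjOp, rank_defSubspace_jacOp]
    exact hAT.rank_l2Eigenspace_adjRow_eq hG ha hz
  exact ⟨key _ Complex.I_ne_zero, key _ (neg_ne_zero.2 Complex.I_ne_zero)⟩

/-- The adjacency operator of a locally finite antitree with sphere
sizes `s_n` has the same deficiency indices as the Jacobi matrix with off-diagonal
entries `a_n = √(s_n s_{n+1})` and zero diagonal. -/
theorem antitree_jacobi_same_deficiency {V : Type} [Countable V]
    (G : SimpleGraph V) (hG : G.LocallyFinite) (v : V) (hAT : IsAntitree G v)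
    (a : ℕ → ℝ)
    (ha : ∀ n, a n = Real.sqrt
      (((sphere G v n).ncard : ℝ) * ((sphere G v (n + 1)).ncard : ℝ))) :
    etaP (adjOp G hG) = etaP (jacOp a fun _ => 0) ∧
    etaM (adjOp G hG) = etaM (jacOp a fun _ => 0) :=
  antitree_jacobi_same_deficiency_general G hG v hAT a ha

end DefIdx
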